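/- arXiv:2401.16153 — 4 statements merged into one kernel-verified Lean document; each statement's English description precedes it below -/
import Mathlib

section
/- Let p > 3 and ξ ∈ ℝ be fixed, and r > 0. Then among all pairs (x, y) with x² + y² = r², the sum |x+y+ξ|^p + |x+y-ξ|^p + |y-x+ξ|^p + |y-x-ξ|^p attains its maximum exactly at points with |x| = |y| = r/√2. -/
/-!
Write `G v = |v + ξ| ^ p + |v - ξ| ^ p`, so that `F x y = G (x + y) + G (y - x)`, where
`(x + y)² + (y - x)² = 2r²`. The function `h u = G (√u)` is strictly convex on `[0, ∞)`, hence
`h a + h b < h (a + b) + h 0` for `a, b > 0`, and the maximum is attained exactly when `x + y = 0`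
or `y - x = 0`. Convexity of `h` amounts to `G' v / v` increasing, which holds because `G'`
vanishes at `0` and is strictly convex on `[0, ∞)`: its second derivative is a positive multiple of
`|v + ξ| ^ (p - 4) * (v + ξ) + |v - ξ| ^ (p - 4) * (v - ξ)`, positive for `v > 0` because
`w ↦ |w| ^ (p - 4) * w` is strictly increasing when `p > 3`.
-/

open Real Set

theorem hasDerivAt_abs_rpow_mul_self {s : ℝ} (hs : 1 < s) (w : ℝ) :
    HasDerivAt (fun w => |w| ^ s * w) ((s + 1) * |w| ^ s) w := by
  refine ((hasDerivAt_abs_rpow w hs).mul (hasDerivAt_id w)).congr_deriv ?_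
  have : |w| ^ s = |w| ^ (s - 2) * (w * w) := by
    rw [← abs_mul_abs_self, ← sq, ← rpow_natCast,
      ← rpow_add' (abs_nonneg w) (by norm_num; linarith)]
    norm_num
  rw [this, id]; ring

theorem strictMono_abs_rpow_mul_self {s : ℝ} (hs : -1 < s) :
    StrictMono fun w : ℝ => |w| ^ s * w := by
  refine strictMono_of_odd_strictMonoOn_nonneg (fun w => by simp) fun a ha b _ hab => ?_
  have hb0 : 0 < b := lt_of_le_of_lt ha hab
  rcases (mem_Ici.mp ha).eq_or_lt with rfl | ha0
  · simp only [mul_zero]; positivity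
  · rw [abs_of_pos ha0, abs_of_pos hb0, ← rpow_add_one ha0.ne', ← rpow_add_one hb0.ne']
    exact rpow_lt_rpow ha0.le hab (by linarith)

noncomputable def powPair (p ξ v : ℝ) : ℝ := |v + ξ| ^ p + |v - ξ| ^ p

noncomputable def oddPowPair (s ξ v : ℝ) : ℝ := |v + ξ| ^ s * (v + ξ) + |v - ξ| ^ s * (v - ξ)

variable {ξ : ℝ}

theorem powPair_neg (p v : ℝ) : powPair p ξ (-v) = powPair p ξ v := by
  rw [powPair, powPair, ← abs_neg (-v + ξ), ← abs_neg (-v - ξ)]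
  ring_nf

theorem powPair_sqrt_sq (p v : ℝ) : powPair p ξ √(v ^ 2) = powPair p ξ v := by
  rw [sqrt_sq_eq_abs]
  rcases abs_choice v with h | h <;> rw [h]
  exact powPair_neg p v

theorem oddPowPair_zero (s : ℝ) : oddPowPair s ξ 0 = 0 := by
  rw [oddPowPair, zero_add, zero_sub, abs_neg]; ring

theorem oddPowPair_pos {s v : ℝ} (hs : -1 < s) (hv : 0 < v) : 0 < oddPowPair s ξ v := by
  have := strictMono_abs_rpow_mul_self hs (show ξ - v < v + ξ by linarith)
  simp only at this
  rw [oddPowPair, ← neg_sub ξ v, abs_neg]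
  linarith

theorem hasDerivAt_powPair {p : ℝ} (hp : 1 < p) (v : ℝ) :
    HasDerivAt (powPair p ξ) (p * oddPowPair (p - 2) ξ v) v := by
  have h₁ := (hasDerivAt_abs_rpow (v + ξ) hp).comp v ((hasDerivAt_id v).add_const ξ)
  have h₂ := (hasDerivAt_abs_rpow (v - ξ) hp).comp v ((hasDerivAt_id v).sub_const ξ)
  refine (h₁.add h₂).congr_deriv ?_
  rw [oddPowPair]; ring

theorem hasDerivAt_oddPowPair {s : ℝ} (hs : 1 < s) (v : ℝ) :
    HasDerivAt (oddPowPair s ξ) ((s + 1) * powPair s ξ v) v := by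
  have h₁ := (hasDerivAt_abs_rpow_mul_self hs (v + ξ)).comp v ((hasDerivAt_id v).add_const ξ)
  have h₂ := (hasDerivAt_abs_rpow_mul_self hs (v - ξ)).comp v ((hasDerivAt_id v).sub_const ξ)
  refine (h₁.add h₂).congr_deriv ?_
  rw [powPair]; ring

theorem StrictConvexOn.add_lt_map_add_add_map_zero {f : ℝ → ℝ} (hf : StrictConvexOn ℝ (Ici 0) f)
    {a b : ℝ} (ha : 0 < a) (hb : 0 < b) : f a + f b < f (a + b) + f 0 := by
  have hab : 0 < a + b := add_pos ha hb
  have h₁ := hf.secant_strict_mono self_mem_Ici ha.le hab.le ha.ne' hab.ne' (by linarith)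
  have h₂ := hf.secant_strict_mono self_mem_Ici hb.le hab.le hb.ne' hab.ne' (by linarith)
  rw [sub_zero, sub_zero, div_lt_div_iff₀ ha hab] at h₁
  rw [sub_zero, sub_zero, div_lt_div_iff₀ hb hab] at h₂
  nlinarith

theorem strictConvexOn_oddPowPair {s : ℝ} (hs : 1 < s) :
    StrictConvexOn ℝ (Ici 0) (oddPowPair s ξ) := by
  have hderiv : deriv (oddPowPair s ξ) = fun v => (s + 1) * powPair s ξ v :=
    funext fun v => (hasDerivAt_oddPowPair hs v).deriv
  refine strictConvexOn_of_deriv2_pos (convex_Ici 0)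
    (fun v _ => (hasDerivAt_oddPowPair hs v).continuousAt.continuousWithinAt) fun v hv => ?_
  rw [interior_Ici] at hv
  rw [Function.iterate_succ_apply, Function.iterate_one, hderiv,
    (((hasDerivAt_powPair hs v).const_mul (s + 1))).deriv]
  have := oddPowPair_pos (ξ := ξ) (show -1 < s - 2 by linarith) hv
  positivity

theorem strictMonoOn_oddPowPair_div {s : ℝ} (hs : 1 < s) :
    StrictMonoOn (fun v => oddPowPair s ξ v / v) (Ioi 0) := fun a ha b hb hab => by
  simpa [oddPowPair_zero] using (strictConvexOn_oddPowPair hs).secant_strict_mono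
    self_mem_Ici (mem_Ici.mpr (le_of_lt ha)) (mem_Ici.mpr (le_of_lt hb)) ha.ne' hb.ne' hab

theorem strictConvexOn_powPair_sqrt {p : ℝ} (hp : 3 < p) :
    StrictConvexOn ℝ (Ici 0) fun u => powPair p ξ √u := by
  have hcont : Continuous (powPair p ξ) := continuous_iff_continuousAt.mpr fun v =>
    (hasDerivAt_powPair (by linarith) v).continuousAt
  refine StrictMonoOn.strictConvexOn_of_deriv (convex_Ici 0)
    (hcont.comp continuous_sqrt).continuousOn ?_
  have hderiv : ∀ u ∈ Ioi (0 : ℝ),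
      deriv (fun u => powPair p ξ √u) u = p / 2 * (oddPowPair (p - 2) ξ √u / √u) := by
    intro u hu
    have hd : HasDerivAt (fun u => powPair p ξ √u)
        (p * oddPowPair (p - 2) ξ √u * (1 / (2 * √u))) u :=
      (hasDerivAt_powPair (by linarith) √u).comp u (hasDerivAt_sqrt (ne_of_gt hu))
    rw [hd.deriv]
    field_simp
  rw [interior_Ici]
  intro a ha b hb hab
  rw [hderiv a ha, hderiv b hb]
  have := strictMonoOn_oddPowPair_div (ξ := ξ) (show 1 < p - 2 by linarith)
    (sqrt_pos.mpr ha) (sqrt_pos.mpr hb) (sqrt_lt_sqrt (le_of_lt ha) hab)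
  gcongr

theorem powPair_add_powPair_le {p : ℝ} (hp : 3 < p) (s t : ℝ) :
    powPair p ξ s + powPair p ξ t ≤ powPair p ξ √(s ^ 2 + t ^ 2) + powPair p ξ 0 ∧
      (powPair p ξ s + powPair p ξ t = powPair p ξ √(s ^ 2 + t ^ 2) + powPair p ξ 0 ↔
        s = 0 ∨ t = 0) := by
  have hdegenerate : s = 0 ∨ t = 0 →
      powPair p ξ s + powPair p ξ t = powPair p ξ √(s ^ 2 + t ^ 2) + powPair p ξ 0 := by
    rintro (rfl | rfl)
    · rw [zero_pow two_ne_zero, zero_add, powPair_sqrt_sq, add_comm]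
    · rw [zero_pow two_ne_zero, add_zero, powPair_sqrt_sq]
  have hstrict : s ≠ 0 → t ≠ 0 →
      powPair p ξ s + powPair p ξ t < powPair p ξ √(s ^ 2 + t ^ 2) + powPair p ξ 0 := by
    intro hs ht
    have := (strictConvexOn_powPair_sqrt (ξ := ξ) hp).add_lt_map_add_add_map_zero
      (pow_two_pos_of_ne_zero hs) (pow_two_pos_of_ne_zero ht)
    rwa [powPair_sqrt_sq, powPair_sqrt_sq, sqrt_zero] at this
  by_cases h : s = 0 ∨ t = 0
  · exact ⟨(hdegenerate h).le, iff_of_true (hdegenerate h) h⟩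
  · obtain ⟨hs, ht⟩ := not_or.mp h
    exact ⟨(hstrict hs ht).le, iff_of_false (hstrict hs ht).ne h⟩

/-- For `p > 3`, `ξ ∈ ℝ`, `r > 0`, among all `(x, y)` with `x² + y² = r²` the sum
`|x+y+ξ|^p + |x+y-ξ|^p + |y-x+ξ|^p + |y-x-ξ|^p` attains its maximum exactly at
points with `|x| = |y| = r/√2`. -/
theorem stmt_2 (p ξ r : ℝ) (hp : 3 < p) (hr : 0 < r)
    (F : ℝ → ℝ → ℝ)
    (hF : ∀ x y : ℝ, F x y =
      |x + y + ξ| ^ p + |x + y - ξ| ^ p + |y - x + ξ| ^ p + |y - x - ξ| ^ p)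
    (x y : ℝ) (hxy : x ^ 2 + y ^ 2 = r ^ 2) :
    F x y ≤ F (r / Real.sqrt 2) (r / Real.sqrt 2) ∧
      (F x y = F (r / Real.sqrt 2) (r / Real.sqrt 2) ↔
        (|x| = r / Real.sqrt 2 ∧ |y| = r / Real.sqrt 2)) := by
  set c := r / √2
  have hc : 0 < c := by positivity
  have hc2 : c ^ 2 = r ^ 2 / 2 := by rw [div_pow, sq_sqrt zero_le_two]
  have hF' : ∀ a b, F a b = powPair p ξ (a + b) + powPair p ξ (b - a) := fun a b => by
    rw [hF, powPair, powPair]; ring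
  have hFc : F c c = powPair p ξ √((x + y) ^ 2 + (y - x) ^ 2) + powPair p ξ 0 := by
    rw [hF', sub_self, show (x + y) ^ 2 + (y - x) ^ 2 = (c + c) ^ 2 by nlinarith,
      sqrt_sq (by positivity)]
  have habs : ∀ z, |z| = c ↔ z ^ 2 = c ^ 2 := fun z => by
    rw [← sq_abs z, sq_eq_sq₀ (abs_nonneg z) hc.le]
  have hdiag : x + y = 0 ∨ y - x = 0 ↔ |x| = c ∧ |y| = c := by
    rw [habs, habs, ← mul_eq_zero]
    constructor
    · intro h; constructor <;> nlinarith
    · rintro ⟨hx, hy⟩; nlinarith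
  rw [hF' x y, hFc, ← hdiag]
  exact powPair_add_powPair_le hp (x + y) (y - x)
end

section
/- For real numbers c and p > 1, the function t(x) = |c + x|^p + |c − x|^p is (strictly) increasing on (0, ∞). -/
/-!
`x ↦ |x| ^ p` is strictly convex on all of `ℝ`, hence so is `t(x) = |c + x| ^ p + |c - x| ^ p`.
Since `t` is also even, for `0 ≤ x < y` the point `x` lies strictly between `-y` and `y`, so
`t x < max (t (-y)) (t y) = t y`.
-/

open Set

theorem strictConvexOn_abs_rpow {p : ℝ} (hp : 1 < p) :
    StrictConvexOn ℝ univ fun x : ℝ => |x| ^ p := by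
  refine ⟨convex_univ, fun x _ y _ hxy a b ha hb hab => ?_⟩
  simp only [smul_eq_mul]
  have hp0 : 0 < p := by linarith
  have htri : |a * x + b * y| ≤ a * |x| + b * |y| := by
    simpa only [abs_mul, abs_of_pos ha, abs_of_pos hb] using abs_add_le (a * x) (b * y)
  have hconv : (a * |x| + b * |y|) ^ p ≤ a * |x| ^ p + b * |y| ^ p := by
    simpa only [smul_eq_mul] using
      (convexOn_rpow hp.le).2 (abs_nonneg x) (abs_nonneg y) ha.le hb.le hab
  rcases ne_or_eq |x| |y| with hne | heq
  · calc |a * x + b * y| ^ p ≤ (a * |x| + b * |y|) ^ p :=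
          Real.rpow_le_rpow (abs_nonneg _) htri hp0.le
      _ < a * |x| ^ p + b * |y| ^ p := by
          simpa only [smul_eq_mul] using
            (strictConvexOn_rpow hp).2 (abs_nonneg x) (abs_nonneg y) hne ha hb hab
  · have hy : y = -x := (abs_eq_abs.1 heq.symm).resolve_left (Ne.symm hxy)
    have hx : 0 < |x| := abs_pos.2 fun h => hxy (by simp [hy, h])
    have hab' : |a - b| < a + b := abs_sub_lt_iff.2 ⟨by linarith, by linarith⟩
    have hlt : |a * x + b * y| < a * |x| + b * |y| := by
      rw [hy, abs_neg, ← add_mul, show a * x + b * -x = (a - b) * x by ring, abs_mul]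
      exact mul_lt_mul_of_pos_right hab' hx
    calc |a * x + b * y| ^ p < (a * |x| + b * |y|) ^ p :=
          Real.rpow_lt_rpow (abs_nonneg _) hlt hp0
      _ ≤ a * |x| ^ p + b * |y| ^ p := hconv

theorem StrictConvexOn.add_comp_reflect {g : ℝ → ℝ} (hg : StrictConvexOn ℝ univ g) (c : ℝ) :
    StrictConvexOn ℝ univ fun x => g (c + x) + g (c - x) := by
  refine ⟨convex_univ, fun x _ y _ hxy a b ha hb hab => ?_⟩
  have hplus := hg.2 (mem_univ (c + x)) (mem_univ (c + y)) (by simpa using hxy) ha hb hab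
  have hminus := hg.2 (mem_univ (c - x)) (mem_univ (c - y)) (by simpa using hxy) ha hb hab
  simp only [smul_eq_mul] at hplus hminus ⊢
  rw [show a * (c + x) + b * (c + y) = c + (a * x + b * y) by linear_combination c * hab]
    at hplus
  rw [show a * (c - x) + b * (c - y) = c - (a * x + b * y) by linear_combination c * hab]
    at hminus
  linarith

theorem StrictConvexOn.strictMonoOn_Ici_of_even {f : ℝ → ℝ} (hf : StrictConvexOn ℝ univ f)
    (heven : f.Even) : StrictMonoOn f (Ici 0) := by
  intro x hx y _ hxy
  have hy : 0 < y := lt_of_le_of_lt hx hxy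
  have hseg : x ∈ openSegment ℝ (-y) y := by
    rw [openSegment_eq_Ioo (by linarith)]
    exact ⟨by linarith [mem_Ici.1 hx], hxy⟩
  simpa [heven y] using hf.lt_on_openSegment (mem_univ _) (mem_univ _) (by linarith) hseg

/-- For `c ∈ ℝ` and `p > 1`, the function `t(x) = |c+x|^p + |c-x|^p` is strictly
increasing on `(0, ∞)`. -/
theorem stmt_6 (c p : ℝ) (hp : 1 < p) :
    StrictMonoOn (fun x : ℝ => |c + x| ^ p + |c - x| ^ p) (Set.Ioi (0 : ℝ)) := by
  have heven : Function.Even fun x : ℝ => |c + x| ^ p + |c - x| ^ p := fun x => by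
    dsimp only
    rw [← sub_eq_add_neg, sub_neg_eq_add, add_comm]
  exact ((strictConvexOn_abs_rpow hp).add_comp_reflect c).strictMonoOn_Ici_of_even heven
    |>.mono Ioi_subset_Ici_self
end

section
/- For normalized Rademacher sums S_n = (r_1 + ⋯ + r_n)/√n and 0 < λ < 1/2, sup_n E[exp(λ S_n²)] = 1/√(1 − 2λ), i.e. E[exp(λ S_n²)] ≤ 1/√(1−2λ) for all n and E[exp(λ S_n²)] → 1/√(1−2λ) as n → ∞. -/
/-!
Hubbard–Stratonovich linearization: with `g` a standard Gaussian and `c = √(2λ)`,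
`exp (λ s²) = E_g[exp (c s g)]`, so averaging over the signs turns `E[exp (λ S_n²)]` into
`E_g[cosh (c g / √n) ^ n]`. Since `cosh u ≤ exp (u² / 2)`, the integrand is bounded by
`exp (λ g²)`, whose expectation is `1 / √(1 - 2λ)`; and `cosh (c g / √n) ^ n → exp (λ g²)`
pointwise, so dominated convergence gives the limit.
-/

open Real Filter MeasureTheory ProbabilityTheory Topology

lemma one_add_sq_div_two_le_cosh (x : ℝ) : 1 + x ^ 2 / 2 ≤ cosh x := by
  have h := sum_le_hasSum (Finset.range 2) (fun i _ => by rw [pow_mul]; positivity) (hasSum_cosh x)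
  simpa [Finset.sum_range_succ] using h

lemma cosh_div_sqrt_pow_le (a : ℝ) (n : ℕ) : cosh (a / √n) ^ n ≤ exp (a ^ 2 / 2) := by
  rcases n.eq_zero_or_pos with rfl | hn
  · simp only [pow_zero, one_le_exp_iff]; positivity
  calc cosh (a / √n) ^ n ≤ exp ((a / √n) ^ 2 / 2) ^ n := by
        gcongr; exact cosh_le_exp_half_sq _
    _ = exp (a ^ 2 / 2) := by
        rw [← exp_nat_mul, div_pow, sq_sqrt n.cast_nonneg]; congr 1; field_simp

-- Squeezed between `(1 + a² / (2n)) ^ n` and `exp (a² / 2)`.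
lemma tendsto_cosh_div_sqrt_pow (a : ℝ) :
    Tendsto (fun n : ℕ => cosh (a / √n) ^ n) atTop (𝓝 (exp (a ^ 2 / 2))) := by
  refine tendsto_of_tendsto_of_tendsto_of_le_of_le (tendsto_one_add_div_pow_exp (a ^ 2 / 2))
    tendsto_const_nhds (fun n => ?_) (cosh_div_sqrt_pow_le a)
  have h := one_add_sq_div_two_le_cosh (a / √n)
  rw [div_pow, sq_sqrt n.cast_nonneg, div_right_comm] at h
  exact pow_le_pow_left₀ (by positivity) h n

lemma sum_bool_exp_mul_sign (u : ℝ) :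
    ∑ b : Bool, exp (u * (if b then 1 else -1)) = 2 * cosh u := by
  simp only [Fintype.sum_bool, Bool.false_eq_true, ↓reduceIte, mul_one, mul_neg, cosh_eq]; ring

lemma sum_exp_mul_sum_sign {ι : Type*} [Fintype ι] [DecidableEq ι] (u : ℝ) :
    ∑ ε : ι → Bool, exp (u * ∑ j, (if ε j then 1 else -1)) = (2 * cosh u) ^ Fintype.card ι := by
  simp_rw [Finset.mul_sum, exp_sum]
  calc _ = ∏ _j : ι, ∑ b : Bool, exp (u * if b then 1 else -1) := (Fintype.prod_sum _).symm
    _ = _ := by rw [sum_bool_exp_mul_sign, Finset.prod_const, Finset.card_univ]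

lemma exp_sq_div_two_eq_integral_gaussianReal (t : ℝ) :
    exp (t ^ 2 / 2) = ∫ x, exp (t * x) ∂gaussianReal 0 1 := by
  simpa [mgf] using (congrFun (mgf_id_gaussianReal (μ := 0) (v := 1)) t).symm

lemma integral_exp_mul_sq_gaussianReal {lam : ℝ} (h : lam < 1 / 2) :
    ∫ x, exp (lam * x ^ 2) ∂gaussianReal 0 1 = 1 / √(1 - 2 * lam) := by
  rw [integral_gaussianReal_eq_integral_smul one_ne_zero]
  simp only [gaussianPDFReal, smul_eq_mul, mul_assoc, ← exp_add, integral_const_mul]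
  calc (√(2 * (π * ↑1)))⁻¹ * ∫ (a : ℝ), rexp (-(a - 0) ^ 2 / (2 * ↑1) + lam * a ^ 2)
      = (√(2 * π))⁻¹ * √(π / (1 / 2 - lam)) := by
        rw [← integral_gaussian]; simp only [mul_one, sub_zero]
        congr 2; ext x; ring_nf
    _ = 1 / √(1 - 2 * lam) := by
        rw [show π / (1 / 2 - lam) = 2 * π / (1 - 2 * lam) by field_simp,
          sqrt_div' _ (by linarith)]
        field_simp

lemma integrable_exp_mul_sq_gaussianReal {lam : ℝ} (h : lam < 1 / 2) :
    Integrable (fun x => exp (lam * x ^ 2)) (gaussianReal 0 1) :=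
  -- The Bochner integral of a non-integrable function is `0`.
  Integrable.of_integral_ne_zero <| by
    rw [integral_exp_mul_sq_gaussianReal h]
    exact one_div_ne_zero (sqrt_ne_zero'.2 (by linarith))

lemma integral_cosh_mul_pow_gaussianReal {ι : Type*} [Fintype ι] [DecidableEq ι] (a : ℝ) :
    ∫ x, cosh (a * x) ^ Fintype.card ι ∂gaussianReal 0 1 =
      1 / 2 ^ Fintype.card ι *
        ∑ ε : ι → Bool, exp ((a * ∑ j, (if ε j then 1 else -1)) ^ 2 / 2) := by
  simp_rw [exp_sq_div_two_eq_integral_gaussianReal]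
  rw [← integral_finsetSum _ (fun ε _ => integrable_exp_mul_gaussianReal _),
    ← integral_const_mul]
  congr 1; ext x
  rw [Finset.sum_congr rfl (fun ε _ => by rw [mul_right_comm]), sum_exp_mul_sum_sign, mul_pow]
  field_simp

/-- For normalized Rademacher sums `S_n = (r_1 + ⋯ + r_n)/√n` and `0 < λ < 1/2`,
`E[exp(λ S_n²)] ≤ 1/√(1-2λ)` for every `n ≥ 1`, and
`E[exp(λ S_n²)] → 1/√(1-2λ)` as `n → ∞`. -/
theorem stmt_17 (lam : ℝ) (h0 : 0 < lam) (h1 : lam < 1 / 2)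
    (E : ℕ → ℝ)
    (hE : ∀ n : ℕ, E n =
      (1 / 2 ^ n : ℝ) *
        ∑ ε : Fin n → Bool,
          Real.exp (lam * ((∑ j, (if ε j then (1 : ℝ) else -1)) / Real.sqrt n) ^ 2)) :
    (∀ n : ℕ, 1 ≤ n → E n ≤ 1 / Real.sqrt (1 - 2 * lam)) ∧
      Filter.Tendsto E Filter.atTop (nhds (1 / Real.sqrt (1 - 2 * lam))) := by
  set c := √(2 * lam)
  have hc : c ^ 2 = 2 * lam := sq_sqrt (by linarith)
  have hsq (x : ℝ) : (c * x) ^ 2 / 2 = lam * x ^ 2 := by rw [mul_pow, hc]; ring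
  have hrep (n : ℕ) : E n = ∫ x, cosh (c * x / √n) ^ n ∂gaussianReal 0 1 := by
    have h := integral_cosh_mul_pow_gaussianReal (ι := Fin n) (c / √n)
    simp_rw [Fintype.card_fin, div_mul_eq_mul_div c] at h
    rw [hE n, h]
    simp_rw [mul_div_assoc c, hsq]
  have hbound (n : ℕ) (x : ℝ) : cosh (c * x / √n) ^ n ≤ exp (lam * x ^ 2) :=
    hsq x ▸ cosh_div_sqrt_pow_le (c * x) n
  have hlim (x : ℝ) :
      Tendsto (fun n : ℕ => cosh (c * x / √n) ^ n) atTop (𝓝 (exp (lam * x ^ 2))) :=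
    hsq x ▸ tendsto_cosh_div_sqrt_pow (c * x)
  have hint := integrable_exp_mul_sq_gaussianReal h1
  rw [← integral_exp_mul_sq_gaussianReal h1]
  refine ⟨fun n _ => ?_, ?_⟩
  · rw [hrep n]
    exact integral_mono_of_nonneg (ae_of_all _ fun x => by positivity) hint
      (ae_of_all _ (hbound n))
  · rw [funext hrep]
    refine tendsto_integral_of_dominated_convergence _ (fun n => by fun_prop) hint
      (fun n => ae_of_all _ fun x => ?_) (ae_of_all _ hlim)
    rw [norm_of_nonneg (by positivity)]
    exact hbound n x
end

section
/- For even integer p = 2m ≥ 4, and independent Rademacher variables, the moments E[((r_1+⋯+r_n)/√n)^{2m}] are increasing in n and converge to (2m)!/(2^m m!) as n → ∞. -/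
/-!
Write `μₖ(a) = E (∑ rᵢ aᵢ)^k` and `Sₙ = r₁ + ⋯ + rₙ`. Averaging over the signs `r_p, r_q` turns
`μ₂ₘ(a)` into the mean of `∑_{±,±} (t ± a_p ± a_q)^(2m)`, `t` being the rest of the sum; for fixed
`a_p² + a_q²` this is a polynomial with nonnegative coefficients in `(a_p a_q)²`. So replacing
`(a_p, a_q)` by a pair with the same sum of squares and a larger product can only increase `μ₂ₘ`.
A chain of `n` such moves carries `(0, √(n+1), …, √(n+1))` to `(√n, …, √n)`, which gives
`(n+1)^m E Sₙ^(2m) ≤ n^m E Sₙ₊₁^(2m)`.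

Conditioning on one sign gives `E Sₙ₊₁^(2m) = ∑_r C(2m,2r) E Sₙ^(2m-2r)`, and induction on `n`
yields `(2m)!/2^m · C(n,m) ≤ E Sₙ^(2m) ≤ (2m)!/(2^m m!) · n^m`; both bounds are asymptotic to
`(2m)!/(2^m m!) · n^m`.
-/

open Finset Function Filter Topology Asymptotics Nat
open scoped BigOperators

section Binomial

variable {R : Type*} [CommRing R]

theorem add_pow_add_sub_pow (a b : R) (n : ℕ) :
    (a + b) ^ n + (a - b) ^ n =
      ∑ j ∈ range (n + 1), (1 + (-1) ^ j) * (b ^ j * a ^ (n - j) * n.choose j) := by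
  rw [add_comm a, add_pow, sub_eq_neg_add, add_pow, ← sum_add_distrib]
  refine sum_congr rfl fun j _ => ?_
  rw [neg_pow]
  ring

theorem sum_range_two_mul_add_one_one_add_neg_one_pow_mul (M : ℕ) (f : ℕ → R) :
    ∑ j ∈ range (2 * M + 1), (1 + (-1) ^ j) * f j = 2 * ∑ r ∈ range (M + 1), f (2 * r) := by
  induction M with
  | zero => simp; ring
  | succ M ih =>
    have hodd : (-1 : R) ^ (2 * M + 1) = -1 := (odd_two_mul_add_one M).neg_one_pow
    have heven : (-1 : R) ^ (2 * M + 1 + 1) = 1 := by rw [pow_succ, hodd]; ring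
    rw [show 2 * (M + 1) + 1 = 2 * M + 1 + 1 + 1 by ring, sum_range_succ, sum_range_succ, ih,
      sum_range_succ _ (M + 1), hodd, heven, show 2 * M + 1 + 1 = 2 * (M + 1) by ring]
    ring

theorem add_pow_two_mul_add_sub_pow_two_mul (a b : R) (n : ℕ) :
    (a + b) ^ (2 * n) + (a - b) ^ (2 * n) =
      2 * ∑ r ∈ range (n + 1), b ^ (2 * r) * a ^ (2 * n - 2 * r) * (2 * n).choose (2 * r) := by
  rw [add_pow_add_sub_pow, sum_range_two_mul_add_one_one_add_neg_one_pow_mul]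

end Binomial

section BinomialOrder

variable {R : Type*} [CommRing R] [LinearOrder R] [IsStrictOrderedRing R]

theorem add_pow_add_sub_pow_le_of_sq_le {a b c : R} (n : ℕ) (ha : 0 ≤ a) (hbc : b ^ 2 ≤ c ^ 2) :
    (a + b) ^ n + (a - b) ^ n ≤ (a + c) ^ n + (a - c) ^ n := by
  rw [add_pow_add_sub_pow, add_pow_add_sub_pow]
  refine sum_le_sum fun j _ => ?_
  rcases Nat.even_or_odd j with ⟨i, rfl⟩ | hj
  · rw [← two_mul, pow_mul, pow_mul, pow_mul]
    have : (b ^ 2) ^ i ≤ (c ^ 2) ^ i := pow_le_pow_left₀ (sq_nonneg b) hbc i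
    gcongr
  · simp [hj.neg_one_pow]

theorem add_pow_two_mul_add_sub_pow_two_mul_le {x y x' y' : R} (n : ℕ)
    (hsq : x ^ 2 + y ^ 2 = x' ^ 2 + y' ^ 2) (hprod : (x * y) ^ 2 ≤ (x' * y') ^ 2) :
    (x + y) ^ (2 * n) + (x - y) ^ (2 * n) ≤ (x' + y') ^ (2 * n) + (x' - y') ^ (2 * n) := by
  have key (u v : R) : (u + v) ^ (2 * n) + (u - v) ^ (2 * n) =
      (u ^ 2 + v ^ 2 + 2 * u * v) ^ n + (u ^ 2 + v ^ 2 - 2 * u * v) ^ n := by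
    rw [pow_mul, pow_mul]; ring
  rw [key, key, hsq]
  refine add_pow_add_sub_pow_le_of_sq_le n (by positivity) ?_
  nlinarith

def fourSignSum (k : ℕ) (t x y : R) : R :=
  (t + x + y) ^ k + (t + x - y) ^ k + (t - x + y) ^ k + (t - x - y) ^ k

theorem fourSignSum_le {x y x' y' : R} (m : ℕ) (t : R)
    (hsq : x ^ 2 + y ^ 2 = x' ^ 2 + y' ^ 2) (hprod : (x * y) ^ 2 ≤ (x' * y') ^ 2) :
    fourSignSum (2 * m) t x y ≤ fourSignSum (2 * m) t x' y' := by
  have key (u v : R) : fourSignSum (2 * m) t u v =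
      2 * ∑ r ∈ range (m + 1), t ^ (2 * m - 2 * r) * (2 * m).choose (2 * r) *
        ((u + v) ^ (2 * r) + (u - v) ^ (2 * r)) := by
    have hsplit : fourSignSum (2 * m) t u v = ((t + (u + v)) ^ (2 * m) + (t - (u + v)) ^ (2 * m)) +
        ((t + (u - v)) ^ (2 * m) + (t - (u - v)) ^ (2 * m)) := by
      rw [fourSignSum]; ring
    rw [hsplit, add_pow_two_mul_add_sub_pow_two_mul, add_pow_two_mul_add_sub_pow_two_mul,
      ← mul_add, ← sum_add_distrib]
    congr 1
    exact sum_congr rfl fun r _ => by ring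
  rw [key, key]
  refine mul_le_mul_of_nonneg_left (sum_le_sum fun r _ => ?_) zero_le_two
  have ht : 0 ≤ t ^ (2 * m - 2 * r) := by
    rw [← Nat.mul_sub]
    exact (even_two_mul _).pow_nonneg t
  exact mul_le_mul_of_nonneg_left (add_pow_two_mul_add_sub_pow_two_mul_le r hsq hprod)
    (mul_nonneg ht (Nat.cast_nonneg _))

end BinomialOrder

def boolSign (b : Bool) : ℝ := if b then 1 else -1

section Rademacher

variable {ι : Type*} [Fintype ι] [DecidableEq ι]

noncomputable def rademacherMoment (k : ℕ) (a : ι → ℝ) : ℝ :=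
  𝔼 ε : ι → Bool, (∑ i, boolSign (ε i) * a i) ^ k

theorem rademacherMoment_zero (a : ι → ℝ) : rademacherMoment 0 a = 1 := by
  simp [rademacherMoment]

theorem rademacherMoment_two_mul_nonneg (m : ℕ) (a : ι → ℝ) : 0 ≤ rademacherMoment (2 * m) a :=
  expect_nonneg fun _ _ => (even_two_mul m).pow_nonneg _

theorem rademacherMoment_smul (k : ℕ) (c : ℝ) (a : ι → ℝ) :
    rademacherMoment k (c • a) = c ^ k * rademacherMoment k a := by
  simp only [rademacherMoment, mul_expect, ← mul_pow, mul_sum, Pi.smul_apply, smul_eq_mul,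
    mul_left_comm c]

theorem expect_eq_expect_add_flip_div_two (F : (ι → Bool) → ℝ) (p : ι) :
    𝔼 ε, F ε = 𝔼 ε, (F ε + F (update ε p (!ε p))) / 2 := by
  have hflip : Involutive fun ε : ι → Bool => update ε p (!ε p) := fun ε => by simp
  have : 𝔼 ε, F (update ε p (!ε p)) = 𝔼 ε, F ε :=
    Fintype.expect_equiv hflip.toPerm _ _ fun _ => rfl
  rw [← expect_div, expect_add_distrib, this]
  ring

theorem rademacherMoment_eq_expect_fourSignSum (k : ℕ) (a : ι → ℝ) {p q : ι} (hpq : p ≠ q) :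
    rademacherMoment k a =
      𝔼 ε : ι → Bool,
        fourSignSum k (∑ i ∈ (univ.erase p).erase q, boolSign (ε i) * a i) (a p) (a q) / 4 := by
  set T : (ι → Bool) → ℝ := fun ε => ∑ i ∈ (univ.erase p).erase q, boolSign (ε i) * a i
  change _ = 𝔼 ε, fourSignSum k (T ε) (a p) (a q) / 4
  have hsplit (ε : ι → Bool) :
      ∑ i, boolSign (ε i) * a i = T ε + boolSign (ε p) * a p + boolSign (ε q) * a q := by
    rw [← add_sum_erase _ _ (mem_univ p), ← add_sum_erase _ _ (mem_erase.2 ⟨hpq.symm, mem_univ q⟩)]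
    ring
  have hT (ε : ι → Bool) (j : ι) (hj : j = p ∨ j = q) (b : Bool) : T (update ε j b) = T ε := by
    refine sum_congr rfl fun i hi => ?_
    obtain ⟨hiq, hip⟩ : i ≠ q ∧ i ≠ p := by simpa using hi
    rw [update_of_ne (by rcases hj with rfl | rfl <;> assumption)]
  clear_value T
  rw [rademacherMoment, expect_eq_expect_add_flip_div_two _ p,
    expect_eq_expect_add_flip_div_two _ q]
  refine expect_congr rfl fun ε _ => ?_
  simp only [hsplit, hT _ _ (Or.inl rfl), hT _ _ (Or.inr rfl), update_self, update_of_ne hpq,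
    update_of_ne hpq.symm]
  cases ε p <;> cases ε q <;>
    simp only [boolSign, fourSignSum, Bool.not_true, Bool.not_false, if_true, Bool.false_eq_true,
      if_false] <;> ring

theorem rademacherMoment_le_of_sq_eq_of_mul_sq_le (m : ℕ) {a b : ι → ℝ} {p q : ι} (hpq : p ≠ q)
    (hab : ∀ i, i ≠ p → i ≠ q → a i = b i) (hsq : a p ^ 2 + a q ^ 2 = b p ^ 2 + b q ^ 2)
    (hprod : (a p * a q) ^ 2 ≤ (b p * b q) ^ 2) :
    rademacherMoment (2 * m) a ≤ rademacherMoment (2 * m) b := by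
  rw [rademacherMoment_eq_expect_fourSignSum _ _ hpq,
    rademacherMoment_eq_expect_fourSignSum _ _ hpq]
  refine expect_le_expect fun ε _ => ?_
  have hT : ∑ i ∈ (univ.erase p).erase q, boolSign (ε i) * a i =
      ∑ i ∈ (univ.erase p).erase q, boolSign (ε i) * b i :=
    sum_congr rfl fun i hi => by
      obtain ⟨hiq, hip⟩ : i ≠ q ∧ i ≠ p := by simpa using hi
      rw [hab i hip hiq]
  rw [hT]
  gcongr
  exact fourSignSum_le m _ hsq hprod

end Rademacher

theorem rademacherMoment_fin_zero (k : ℕ) (a : Fin 0 → ℝ) : rademacherMoment k a = 0 ^ k := by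
  simp [rademacherMoment]

theorem rademacherMoment_cons {n : ℕ} (k : ℕ) (x : ℝ) (a : Fin n → ℝ) :
    rademacherMoment k (Fin.cons x a : Fin (n + 1) → ℝ) =
      𝔼 ε : Fin n → Bool,
        ((∑ i, boolSign (ε i) * a i + x) ^ k + (∑ i, boolSign (ε i) * a i - x) ^ k) / 2 := by
  set F : (Fin (n + 1) → Bool) → ℝ :=
    fun ε => (∑ i, boolSign (ε i) * (Fin.cons x a : Fin (n + 1) → ℝ) i) ^ k
  rw [rademacherMoment, ← Fintype.expect_equiv (Fin.consEquiv fun _ => Bool)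
    (fun bε => F (Fin.consEquiv _ bε)) F fun _ => rfl]
  rw [← univ_product_univ, expect_product, expect_comm]
  refine expect_congr rfl fun ε _ => ?_
  rw [Fintype.expect_eq_sum_div_card, Fintype.sum_bool, Fintype.card_bool]
  simp only [F, Fin.consEquiv_apply, Fin.sum_univ_succ, Fin.cons_zero, Fin.cons_succ, boolSign,
    if_true, Bool.false_eq_true, if_false]
  ring

theorem rademacherMoment_cons_zero {n : ℕ} (k : ℕ) (a : Fin n → ℝ) :
    rademacherMoment k (Fin.cons 0 a : Fin (n + 1) → ℝ) = rademacherMoment k a := by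
  rw [rademacherMoment_cons]
  simp [rademacherMoment]

/-- The weights after `i` moves of the chain: coordinate `0` has grown from `0` to `√i`, while
coordinates `1, …, i` have dropped from `√(n+1)` to `√n`. -/
noncomputable def spreadWeights (n i : ℕ) : Fin (n + 1) → ℝ := fun k =>
  if (k : ℕ) = 0 then √i else if (k : ℕ) ≤ i then √n else √(n + 1)

theorem spreadWeights_zero (n : ℕ) :
    spreadWeights n 0 = Fin.cons 0 (√(n + 1) • 1 : Fin n → ℝ) := by
  ext k
  refine Fin.cases ?_ (fun k => ?_) k <;> simp [spreadWeights]

theorem spreadWeights_self (n : ℕ) : spreadWeights n n = √n • 1 := by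
  ext k
  simp [spreadWeights, k.is_le]

theorem rademacherMoment_spreadWeights_le_succ (m : ℕ) {n i : ℕ} (hi : i < n) :
    rademacherMoment (2 * m) (spreadWeights n i) ≤
      rademacherMoment (2 * m) (spreadWeights n (i + 1)) := by
  have hpq : (⟨i + 1, by omega⟩ : Fin (n + 1)) ≠ 0 := by simp [Fin.ext_iff]
  refine rademacherMoment_le_of_sq_eq_of_mul_sq_le m hpq (fun k hkp hk0 => ?_) ?_ ?_
  · have hkp : (k : ℕ) ≠ i + 1 := fun h => hkp (Fin.ext h)
    have hk0 : (k : ℕ) ≠ 0 := fun h => hk0 (Fin.ext h)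
    simp only [spreadWeights, if_neg hk0]
    congr 1
    exact propext (by omega)
  · simp [spreadWeights, Real.sq_sqrt, add_nonneg]
    ring
  · have hle : ((n : ℝ) + 1) * i ≤ n * (i + 1) := by
      have : (i : ℝ) ≤ n := by exact_mod_cast hi.le
      linarith
    simpa [spreadWeights, mul_pow, Real.sq_sqrt, add_nonneg] using hle

theorem succ_pow_mul_rademacherMoment_le (m n : ℕ) :
    ((n : ℝ) + 1) ^ m * rademacherMoment (2 * m) (1 : Fin n → ℝ) ≤
      (n : ℝ) ^ m * rademacherMoment (2 * m) (1 : Fin (n + 1) → ℝ) := by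
  have hchain : ∀ i ≤ n, rademacherMoment (2 * m) (spreadWeights n 0) ≤
      rademacherMoment (2 * m) (spreadWeights n i) := by
    intro i
    induction i with
    | zero => exact fun _ => le_rfl
    | succ i ih =>
      exact fun hi => (ih (by omega)).trans (rademacherMoment_spreadWeights_le_succ m hi)
  have h := hchain n le_rfl
  rwa [spreadWeights_zero, rademacherMoment_cons_zero, spreadWeights_self, rademacherMoment_smul,
    rademacherMoment_smul, pow_mul, pow_mul, Real.sq_sqrt (by positivity),
    Real.sq_sqrt (by positivity)] at h

theorem rademacherMoment_div_pow_le_succ (m : ℕ) {n : ℕ} (hn : 1 ≤ n) :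
    rademacherMoment (2 * m) (1 : Fin n → ℝ) / (n : ℝ) ^ m ≤
      rademacherMoment (2 * m) (1 : Fin (n + 1) → ℝ) / ((n : ℝ) + 1) ^ m := by
  have : (0 : ℝ) < n := by exact_mod_cast hn
  rw [div_le_div_iff₀ (by positivity) (by positivity), mul_comm, mul_comm _ ((n : ℝ) ^ m)]
  exact succ_pow_mul_rademacherMoment_le m n

theorem rademacherMoment_one_succ (m n : ℕ) :
    rademacherMoment (2 * m) (1 : Fin (n + 1) → ℝ) =
      ∑ r ∈ range (m + 1),
        ((2 * m).choose (2 * r) : ℝ) * rademacherMoment (2 * (m - r)) (1 : Fin n → ℝ) := by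
  have hcons : (1 : Fin (n + 1) → ℝ) = Fin.cons 1 1 := by
    ext k
    refine Fin.cases ?_ (fun k => ?_) k <;> simp
  rw [hcons, rademacherMoment_cons]
  simp_rw [add_pow_two_mul_add_sub_pow_two_mul, one_pow, one_mul, ← Nat.mul_sub,
    mul_div_cancel_left₀ _ (two_ne_zero' ℝ), rademacherMoment, mul_expect, expect_sum_comm]
  exact sum_congr rfl fun r _ => expect_congr rfl fun ε _ => mul_comm _ _

/-- `(2m)!/(2^m m!) = (2m-1)‼`, the `2m`-th moment of a standard Gaussian. -/
noncomputable def gaussMoment (m : ℕ) : ℝ := (2 * m)! / (2 ^ m * m !)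

theorem one_le_gaussMoment (m : ℕ) : 1 ≤ gaussMoment m := by
  rw [gaussMoment, one_le_div (by positivity)]
  exact_mod_cast Nat.two_pow_mul_factorial_le_factorial_two_mul m

theorem choose_mul_gaussMoment_mul_gaussMoment {m r : ℕ} (hr : r ≤ m) :
    ((2 * m).choose (2 * r) : ℝ) * gaussMoment (m - r) * gaussMoment r =
      gaussMoment m * m.choose r := by
  obtain ⟨s, rfl⟩ := Nat.exists_eq_add_of_le hr
  rw [Nat.add_sub_cancel_left, mul_add, Nat.cast_choose ℝ (Nat.le_add_right _ _),
    Nat.cast_choose ℝ (Nat.le_add_right _ _), Nat.add_sub_cancel_left, Nat.add_sub_cancel_left]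
  simp only [gaussMoment, ← mul_add, pow_add]
  field_simp

theorem choose_mul_gaussMoment_le {m r : ℕ} (hr : r ≤ m) :
    ((2 * m).choose (2 * r) : ℝ) * gaussMoment (m - r) ≤ gaussMoment m * m.choose r := by
  rw [← choose_mul_gaussMoment_mul_gaussMoment hr]
  have : 0 ≤ gaussMoment (m - r) := zero_le_one.trans (one_le_gaussMoment _)
  exact le_mul_of_one_le_right (by positivity) (one_le_gaussMoment r)

theorem rademacherMoment_one_le (m n : ℕ) :
    rademacherMoment (2 * m) (1 : Fin n → ℝ) ≤ gaussMoment m * (n : ℝ) ^ m := by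
  induction n generalizing m with
  | zero => rcases m with _ | m <;> simp [rademacherMoment_fin_zero, gaussMoment]
  | succ n ih =>
    rw [rademacherMoment_one_succ]
    calc ∑ r ∈ range (m + 1), ((2 * m).choose (2 * r) : ℝ) * rademacherMoment (2 * (m - r)) 1
        ≤ ∑ r ∈ range (m + 1),
            ((2 * m).choose (2 * r) : ℝ) * (gaussMoment (m - r) * (n : ℝ) ^ (m - r)) :=
          sum_le_sum fun r _ => mul_le_mul_of_nonneg_left (ih _) (Nat.cast_nonneg _)
      _ ≤ ∑ r ∈ range (m + 1), gaussMoment m * m.choose r * (n : ℝ) ^ (m - r) :=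
          sum_le_sum fun r hr => by
            rw [← mul_assoc]
            exact mul_le_mul_of_nonneg_right
              (choose_mul_gaussMoment_le (Nat.lt_succ_iff.1 (mem_range.1 hr))) (by positivity)
      _ = gaussMoment m * ((n + 1 : ℕ) : ℝ) ^ m := by
          rw [Nat.cast_succ, add_comm (n : ℝ) 1, add_pow, mul_sum]
          exact sum_congr rfl fun r _ => by ring

theorem factorial_div_two_pow_mul_choose_le_rademacherMoment_one (m n : ℕ) :
    ((2 * m)! / 2 ^ m : ℝ) * n.choose m ≤ rademacherMoment (2 * m) (1 : Fin n → ℝ) := by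
  induction n generalizing m with
  | zero =>
    rcases m with _ | m
    · simp [rademacherMoment_zero]
    · simpa using rademacherMoment_two_mul_nonneg (m + 1) (1 : Fin 0 → ℝ)
  | succ n ih =>
    rcases m with _ | m
    · simp [rademacherMoment_zero]
    rw [rademacherMoment_one_succ, sum_range_succ', sum_range_succ']
    have hrest : 0 ≤ ∑ r ∈ range m, ((2 * (m + 1)).choose (2 * (r + 1 + 1)) : ℝ) *
        rademacherMoment (2 * (m + 1 - (r + 1 + 1))) (1 : Fin n → ℝ) :=
      sum_nonneg fun r _ => mul_nonneg (Nat.cast_nonneg _) (rademacherMoment_two_mul_nonneg _ _)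
    have hfac : ((2 * (m + 1))! / 2 ^ (m + 1) : ℝ) =
        ((2 * (m + 1)).choose 2 : ℝ) * ((2 * m)! / 2 ^ m) := by
      rw [Nat.cast_choose_two, show 2 * (m + 1) = 2 * m + 1 + 1 by ring, Nat.factorial_succ,
        Nat.factorial_succ]
      push_cast
      field_simp
      ring
    have h1 := ih (m + 1)
    have h2 := mul_le_mul_of_nonneg_left (ih m)
      (Nat.cast_nonneg ((2 * (m + 1)).choose 2) : (0 : ℝ) ≤ _)
    rw [hfac] at h1 ⊢
    rw [Nat.choose_succ_succ', Nat.cast_add]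
    simp only [mul_zero, Nat.choose_zero_right, Nat.cast_one, one_mul, Nat.sub_zero,
      Nat.add_sub_cancel, zero_add, mul_one]
    linarith

theorem tendsto_rademacherMoment_one_div_pow (m : ℕ) :
    Tendsto (fun n : ℕ => rademacherMoment (2 * m) (1 : Fin n → ℝ) / (n : ℝ) ^ m) atTop
      (𝓝 (gaussMoment m)) := by
  have hpos : ∀ᶠ n : ℕ in atTop, (0 : ℝ) < n := eventually_gt_atTop 0 |>.mono fun n hn => by
    exact_mod_cast hn
  have hchoose : Tendsto (fun n : ℕ => (n.choose m : ℝ) / ((n : ℝ) ^ m / m !)) atTop (𝓝 1) :=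
    (isEquivalent_iff_tendsto_one (hpos.mono fun n hn => by positivity)).1 (isEquivalent_choose m)
  refine tendsto_of_tendsto_of_tendsto_of_le_of_le'
    (by simpa using hchoose.const_mul (gaussMoment m))
    tendsto_const_nhds (Eventually.of_forall fun n => ?_) (hpos.mono fun n hn => ?_)
  · have hlower := div_le_div_of_nonneg_right
      (factorial_div_two_pow_mul_choose_le_rademacherMoment_one m n) (pow_nonneg n.cast_nonneg m)
    convert hlower using 1
    simp only [gaussMoment]
    field_simp
  · rw [div_le_iff₀ (by positivity)]
    exact rademacherMoment_one_le m n

theorem rademacherMoment_one_div_pow_eq (m n : ℕ) :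
    rademacherMoment (2 * m) (1 : Fin n → ℝ) / (n : ℝ) ^ m =
      (1 / 2 ^ n : ℝ) * ∑ ε : Fin n → Bool,
        ((∑ j, (if ε j then (1 : ℝ) else -1)) / Real.sqrt n) ^ (2 * m) := by
  have hsqrt : √(n : ℝ) ^ (2 * m) = (n : ℝ) ^ m := by rw [pow_mul, Real.sq_sqrt n.cast_nonneg]
  simp only [rademacherMoment, Fintype.expect_eq_sum_div_card, Fintype.card_fun, Fintype.card_bool,
    Fintype.card_fin, Nat.cast_pow, Nat.cast_ofNat, div_pow, hsqrt, boolSign, Pi.one_apply, mul_one,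
    ← sum_div]
  ring

theorem stmt_19_general (m : ℕ)
    (E : ℕ → ℝ)
    (hE : ∀ n : ℕ, E n =
      (1 / 2 ^ n : ℝ) *
        ∑ ε : Fin n → Bool,
          ((∑ j, (if ε j then (1 : ℝ) else -1)) / Real.sqrt n) ^ (2 * m)) :
    (∀ n : ℕ, 1 ≤ n → E n ≤ E (n + 1)) ∧
      Filter.Tendsto E Filter.atTop
        (nhds ((Nat.factorial (2 * m) : ℝ) / (2 ^ m * Nat.factorial m))) := by
  have hE' (n : ℕ) : E n = rademacherMoment (2 * m) (1 : Fin n → ℝ) / (n : ℝ) ^ m :=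
    (hE n).trans (rademacherMoment_one_div_pow_eq m n).symm
  refine ⟨fun n hn => ?_, ?_⟩
  · rw [hE', hE', Nat.cast_succ]
    exact rademacherMoment_div_pow_le_succ m hn
  · rw [funext hE']
    exact tendsto_rademacherMoment_one_div_pow m

/-- For an even integer exponent `p = 2m ≥ 4`, the moments
`E[((r_1+⋯+r_n)/√n)^(2m)]` of normalized Rademacher sums are increasing in `n`
and converge to `(2m)!/(2^m m!)`, the `2m`-th moment of a standard Gaussian. -/
theorem stmt_19 (m : ℕ) (hm : 2 ≤ m)
    (E : ℕ → ℝ)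
    (hE : ∀ n : ℕ, E n =
      (1 / 2 ^ n : ℝ) *
        ∑ ε : Fin n → Bool,
          ((∑ j, (if ε j then (1 : ℝ) else -1)) / Real.sqrt n) ^ (2 * m)) :
    (∀ n : ℕ, 1 ≤ n → E n ≤ E (n + 1)) ∧
      Filter.Tendsto E Filter.atTop
        (nhds ((Nat.factorial (2 * m) : ℝ) / (2 ^ m * Nat.factorial m))) :=
  stmt_19_general m E hE
end
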